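/- Let ℓ > 0 and γ > 0 with ℓ > √γ, and set c² = (1 - γ/ℓ²)/(1 + γ/ℓ) and c̃² = (1 - γ/ℓ²)/(1 + 1/ℓ). Then ℓ - ℓ²c⁴/(ℓc² + 1) = ℓ(1 - c²c̃²). -/
import Mathlib

theorem stmt_1 (ℓ γ : ℝ) (hℓ : 0 < ℓ) (hγ : 0 < γ) (h : Real.sqrt γ < ℓ)
    (c2 ct2 : ℝ)
    (hc2 : c2 = (1 - γ / ℓ ^ 2) / (1 + γ / ℓ))
    (hct2 : ct2 = (1 - γ / ℓ ^ 2) / (1 + 1 / ℓ)) :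
    ℓ - ℓ ^ 2 * c2 ^ 2 / (ℓ * c2 + 1) = ℓ * (1 - c2 * ct2) := by
  have h1 : (0:ℝ) < 1 + γ / ℓ := by positivity
  have h2 : (0:ℝ) < 1 + 1 / ℓ := by positivity
  have key : ℓ * c2 + 1 = (ℓ + 1) / (1 + γ / ℓ) := by
    rw [hc2]; field_simp; ring
  have h3 : (0:ℝ) < ℓ * c2 + 1 := by rw [key]; positivity
  rw [key] at h3 ⊢
  rw [hc2, hct2]
  field_simp
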